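/- arXiv:1307.2396 — 2 statements merged into one kernel-verified Lean document; each statement's English description precedes it below -/
import Mathlib

section
/- Let M be a module over the first Weyl algebra A_1(K), K of characteristic zero, and let m ∈ M satisfy (X∂ - c)^a m = 0 for some a ≥ 1 and c ∈ K. If the image of m in M/∂M is nonzero, then c = -1. -/
/-!
From `d x - x d = 1` we get `x d - c = d x - (c + 1)`, and since scalars commute with `d`,
expanding `(d x - (c + 1))^a` gives `d r + (-(c + 1))^a` for some `r`. So if `c ≠ -1` and
`(x d - c)^a m = 0`, then `m = d (-(c + 1))^{-a} (-r m)` lies in `∂M`.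
-/

section WeylAlgebra

variable {K A : Type*} [Field K] [Ring A] [Algebra K A]

theorem mul_sub_algebraMap_eq_of_mul_sub_mul_eq_one {x d : A} (hWeyl : d * x - x * d = 1)
    (c : K) : x * d - algebraMap K A c = d * x + algebraMap K A (-(c + 1)) := by
  rw [map_neg, map_add, map_one, ← hWeyl]
  noncomm_ring

theorem exists_pow_mul_add_eq_mul_add_pow {R : Type*} [Ring R] {d β : R} (hβ : Commute d β)
    (y : R) (n : ℕ) : ∃ r, (d * y + β) ^ n = d * r + β ^ n := by
  induction n with
  | zero => exact ⟨0, by simp⟩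
  | succ n ih =>
    obtain ⟨r, hr⟩ := ih
    refine ⟨y * d * r + β * r + y * β ^ n, ?_⟩
    rw [pow_succ', hr, pow_succ', mul_add, mul_add, mul_add, add_mul, add_mul, ← mul_assoc β d,
      ← hβ.eq]
    noncomm_ring

theorem eq_smul_inv_smul_of_algebraMap_smul_eq {M : Type*} [AddCommGroup M] [Module A M]
    {d : A} {t : K} (ht : t ≠ 0) {m n : M} (h : algebraMap K A t • m = d • n) :
    m = d • (algebraMap K A t⁻¹ • n) := by
  calc m = algebraMap K A t⁻¹ • algebraMap K A t • m := by
        rw [← mul_smul, ← map_mul, inv_mul_cancel₀ ht, map_one, one_smul]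
    _ = d • (algebraMap K A t⁻¹ • n) := by
        rw [h, ← mul_smul, ← mul_smul, Algebra.commutes]

end WeylAlgebra

theorem stmt3_general (K : Type*) [Field K]
    (A : Type*) [Ring A] [Algebra K A] (x d : A) (hWeyl : d * x - x * d = 1)
    (M : Type*) [AddCommGroup M] [Module A M]
    (m : M) (c : K) (a : ℕ)
    (h2 : ((x * d - algebraMap K A c) ^ a) • m = 0)
    (hm : ∀ m' : M, m ≠ d • m') : c = -1 := by
  by_contra hc
  have ht : (-(c + 1)) ^ a ≠ 0 :=
    pow_ne_zero a (neg_ne_zero.mpr fun h ↦ hc (eq_neg_of_add_eq_zero_left h))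
  obtain ⟨r, hr⟩ := exists_pow_mul_add_eq_mul_add_pow (Algebra.commutes (-(c + 1)) d).symm x a
  rw [mul_sub_algebraMap_eq_of_mul_sub_mul_eq_one hWeyl, hr, ← map_pow, add_smul, mul_smul] at h2
  have h : algebraMap K A ((-(c + 1)) ^ a) • m = d • -(r • m) := by
    rw [smul_neg, eq_neg_of_add_eq_zero_right h2]
  exact hm _ (eq_smul_inv_smul_of_algebraMap_smul_eq ht h)

/-- If `M` is a module over the first Weyl algebra `A₁(K)`
(`char K = 0`), `m ∈ M` satisfies `(X∂ - c)^a m = 0` for some `a ≥ 1`, and the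
image of `m` in `M/∂M` is nonzero, then `c = -1`. -/
theorem stmt3 (K : Type*) [Field K] [CharZero K]
    (A : Type*) [Ring A] [Algebra K A] (x d : A) (hWeyl : d * x - x * d = 1)
    (M : Type*) [AddCommGroup M] [Module A M]
    (m : M) (c : K) (a : ℕ) (ha : 1 ≤ a)
    (h2 : ((x * d - algebraMap K A c) ^ a) • m = 0)
    (hm : ∀ m' : M, m ≠ d • m') : c = -1 :=
  stmt3_general K A x d hWeyl M m c a h2 hm
end

section
/- Let R = K[X₁,...,Xₙ] with char K = 0, f ∈ R a nonzero homogeneous polynomial (positive weighted degrees ωᵢ on Xᵢ), and suppose a₁,...,aₙ ∈ R satisfy Σⱼ ∂/∂Xⱼ(aⱼ/f^i) = 0 in R_f with i ≥ 1 and f not dividing some aⱼ. Then f divides Σⱼ aⱼ·(∂f/∂Xⱼ). -/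
/-!
Since `f` is a non-zero-divisor, clearing the common denominator `f ^ (i + 1)` turns the cycle
condition into the polynomial identity `i * Σⱼ aⱼ ∂ⱼf = f * Σⱼ ∂ⱼaⱼ`, and `i` is a unit in
characteristic zero.
-/

open MvPolynomial

theorem Localization.mk_eq_zero_iff_of_le_nonZeroDivisors {R : Type*} [CommRing R]
    {M : Submonoid R} (hM : M ≤ nonZeroDivisors R) {x : R} {t : M} :
    Localization.mk x t = 0 ↔ x = 0 := by
  rw [Localization.mk_eq_mk', IsLocalization.mk'_eq_zero_iff]
  exact ⟨fun ⟨m, hm⟩ ↦ (hM m.2).1 _ hm, fun hx ↦ ⟨1, by rw [hx, mul_zero]⟩⟩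

theorem isUnit_natCast_of_charZero (K : Type*) {R : Type*} [Field K] [CharZero K] [Semiring R]
    [Algebra K R] {n : ℕ} (hn : n ≠ 0) : IsUnit (n : R) := by
  simpa using (Nat.cast_ne_zero.mpr hn : (n : K) ≠ 0).isUnit.map (algebraMap K R)

theorem stmt8_general (K : Type*) [Field K] [CharZero K] (n : ℕ)
    (f : MvPolynomial (Fin n) K) (hf : f ≠ 0)
    (i : ℕ) (hi : 1 ≤ i) (a : Fin n → MvPolynomial (Fin n) K)
    (hcycle : (∑ j : Fin n,
        Localization.mk
          (f * MvPolynomial.pderiv j (a j) - (i : MvPolynomial (Fin n) K) * a j * MvPolynomial.pderiv j f)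
          (⟨f ^ (i + 1), ⟨i + 1, rfl⟩⟩ : Submonoid.powers f)) = (0 : Localization.Away f)) :
    f ∣ ∑ j : Fin n, a j * MvPolynomial.pderiv j f := by
  rw [← Localization.mk_sum, Localization.mk_eq_zero_iff_of_le_nonZeroDivisors
    (powers_le_nonZeroDivisors_of_noZeroDivisors hf), Finset.sum_sub_distrib, sub_eq_zero] at hcycle
  have key : (i : MvPolynomial (Fin n) K) * ∑ j, a j * pderiv j f = f * ∑ j, pderiv j (a j) :=
    calc (i : MvPolynomial (Fin n) K) * ∑ j, a j * pderiv j f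
        = ∑ j, (i : MvPolynomial (Fin n) K) * a j * pderiv j f := by
          simp only [Finset.mul_sum, mul_assoc]
      _ = ∑ j, f * pderiv j (a j) := hcycle.symm
      _ = f * ∑ j, pderiv j (a j) := (Finset.mul_sum ..).symm
  rw [← (isUnit_natCast_of_charZero K (R := MvPolynomial (Fin n) K) (by omega : i ≠ 0)).dvd_mul_left]
  exact ⟨_, key⟩

/-- If `(a₁/f^i, …, aₙ/f^i)` is a De Rham 1-cycle in normal form
(`Σⱼ ∂/∂Xⱼ(aⱼ/f^i) = 0` in `R_f`, written via the quotient rule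
`∂/∂Xⱼ(aⱼ/f^i) = (f·∂aⱼ/∂Xⱼ - i·aⱼ·∂f/∂Xⱼ)/f^(i+1)`), with `f` a nonzero
weighted-homogeneous polynomial, `i ≥ 1` and `f ∤ aⱼ` for some `j`, then
`f ∣ Σⱼ aⱼ·(∂f/∂Xⱼ)`. -/
theorem stmt8 (K : Type*) [Field K] [CharZero K] (n : ℕ)
    (w : Fin n → ℕ) (hw : ∀ i, 0 < w i)
    (f : MvPolynomial (Fin n) K) (hf : f ≠ 0) (d : ℕ)
    (hfhom : MvPolynomial.IsWeightedHomogeneous w f d)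
    (i : ℕ) (hi : 1 ≤ i) (a : Fin n → MvPolynomial (Fin n) K)
    (hanorm : ∃ j, ¬ f ∣ a j)
    (hcycle : (∑ j : Fin n,
        Localization.mk
          (f * MvPolynomial.pderiv j (a j) - (i : MvPolynomial (Fin n) K) * a j * MvPolynomial.pderiv j f)
          (⟨f ^ (i + 1), ⟨i + 1, rfl⟩⟩ : Submonoid.powers f)) = (0 : Localization.Away f)) :
    f ∣ ∑ j : Fin n, a j * MvPolynomial.pderiv j f :=
  stmt8_general K n f hf i hi a hcycle
end
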